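/- arXiv:1908.09387 — 7 statements merged into one kernel-verified Lean document; each statement's English description precedes it below -/
import Mathlib

section
/- Let V be a vertex set with edge set E, let A be a finite subset of V and B a subset of V with A ⊆ B. If A is strong in B, then for every finite X ⊆ B one has δ(X ∩ A) ≤ δ(X). -/
variable {V : Type*}

/-- Predimension of a finite set `A` in the hypergraph with edge set `E`:
`δ(A) = |A| - #{e ∈ E : e ⊆ A}`. -/
noncomputable def hdelta (E : Set (Finset V)) (A : Finset V) : ℤ :=
  (A.card : ℤ) - ({e : Finset V | e ∈ E ∧ e ⊆ A}).ncard

/-- `A` is strong (self-sufficient) in `C`: `A ⊆ C` and `δ(A) ≤ δ(X)` for every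
finite `X` with `A ⊆ X ⊆ C`. -/
def Strong (E : Set (Finset V)) (A : Finset V) (C : Set V) : Prop :=
  (↑A : Set V) ⊆ C ∧
    ∀ X : Finset V, A ⊆ X → (↑X : Set V) ⊆ C → hdelta E A ≤ hdelta E X

/-- `B` is simply algebraic over `A`. -/
def SimplyAlg [DecidableEq V] (E : Set (Finset V)) (A B : Finset V) : Prop :=
  B.Nonempty ∧ A ∩ B = ∅ ∧ Strong E A (↑(A ∪ B) : Set V) ∧
    hdelta E (A ∪ B) - hdelta E A = 0 ∧
    ∀ B' : Finset V, B' ⊆ B → B' ≠ B → B'.Nonempty →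
      hdelta E (A ∪ B') - hdelta E A ≠ 0

/-- `B` is minimally simply algebraic over `A`. -/
def MinSimplyAlg [DecidableEq V] (E : Set (Finset V)) (A B : Finset V) : Prop :=
  SimplyAlg E A B ∧ ∀ A' : Finset V, A' ⊆ A → A' ≠ A → ¬ SimplyAlg E A' B

/-- `B1` and `B2` are freely joined over `A = B1 ∩ B2`. -/
def FreelyJoined (E : Set (Finset V)) (B1 B2 : Set V) : Prop :=
  ∀ e ∈ E, (↑e : Set V) ⊆ B1 ∪ B2 → (↑e : Set V) ⊆ B1 ∨ (↑e : Set V) ⊆ B2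

lemma edges_finite (E : Set (Finset V)) (A : Finset V) :
    {e : Finset V | e ∈ E ∧ e ⊆ A}.Finite := by
  exact Set.Finite.subset A.powerset.finite_toSet
    (fun e he => by simpa using he.2)

lemma submod (E : Set (Finset V)) [DecidableEq V] (A X : Finset V) :
    hdelta E (A ∪ X) + hdelta E (A ∩ X) ≤ hdelta E A + hdelta E X := by
  have hS := edges_finite E A
  have hT := edges_finite E X
  set S := {e : Finset V | e ∈ E ∧ e ⊆ A}
  set T := {e : Finset V | e ∈ E ∧ e ⊆ X}
  have hunion : S ∪ T ⊆ {e : Finset V | e ∈ E ∧ e ⊆ A ∪ X} := by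
    rintro e (⟨he, hs⟩ | ⟨he, hs⟩) <;>
      exact ⟨he, hs.trans (by simp [Finset.subset_union_left, Finset.subset_union_right])⟩
  have hinter : S ∩ T = {e : Finset V | e ∈ E ∧ e ⊆ A ∩ X} := by
    ext e; constructor
    · rintro ⟨⟨he, h1⟩, _, h2⟩; exact ⟨he, Finset.subset_inter h1 h2⟩
    · rintro ⟨he, hs⟩
      exact ⟨⟨he, hs.trans Finset.inter_subset_left⟩, he, hs.trans Finset.inter_subset_right⟩
  have hcard : (S.ncard : ℤ) + T.ncard ≤
      ({e : Finset V | e ∈ E ∧ e ⊆ A ∪ X}.ncard : ℤ) +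
        ({e : Finset V | e ∈ E ∧ e ⊆ A ∩ X}.ncard : ℤ) := by
    have h1 : (S ∪ T).ncard + (S ∩ T).ncard = S.ncard + T.ncard :=
      Set.ncard_union_add_ncard_inter S T hS hT
    have h2 : (S ∪ T).ncard ≤ {e : Finset V | e ∈ E ∧ e ⊆ A ∪ X}.ncard :=
      Set.ncard_le_ncard hunion (edges_finite E (A ∪ X))
    rw [← hinter]
    exact_mod_cast by omega
  have hc : A.card + X.card = (A ∪ X).card + (A ∩ X).card :=
    (Finset.card_union_add_card_inter A X).symm
  simp only [hdelta]
  have : ((A ∪ X).card : ℤ) + (A ∩ X).card = A.card + X.card := by exact_mod_cast hc.symm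
  linarith

/-- if A is strong in B then δ(X ∩ A) ≤ δ(X) for every finite X ⊆ B. -/
theorem stmt1 [DecidableEq V] (E : Set (Finset V)) (A : Finset V) (B : Set V)
    (h : Strong E A B) (X : Finset V) (hX : (↑X : Set V) ⊆ B) :
    hdelta E (X ∩ A) ≤ hdelta E X := by
  have hAB := h.1
  have hstrong := h.2 (A ∪ X) Finset.subset_union_left (by
    intro v hv
    simp only [Finset.coe_union, Set.mem_union] at hv
    rcases hv with hv | hv
    · exact hAB hv
    · exact hX hv)
  have hsub := submod E A X
  rw [Finset.inter_comm]
  linarith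
end

section
/- Let V be a vertex set with edge set E, let A, B be finite subsets of V and C ⊆ V with A ⊆ B ⊆ C. If A is strong in B and B is strong in C, then A is strong in C. -/
variable {V : Type*}

/-- Submodularity of the predimension. -/
lemma hdelta_submodular [DecidableEq V] (E : Set (Finset V)) (X B : Finset V) :
    hdelta E (X ∪ B) + hdelta E (X ∩ B) ≤ hdelta E X + hdelta E B := by
  unfold hdelta
  have hcard : ((X ∪ B).card : ℤ) + (X ∩ B).card = X.card + B.card := by
    exact_mod_cast Finset.card_union_add_card_inter X B
  have hfX := edges_finite E X
  have hfB := edges_finite E B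
  have hsub : {e : Finset V | e ∈ E ∧ e ⊆ X} ∪ {e : Finset V | e ∈ E ∧ e ⊆ B}
      ⊆ {e : Finset V | e ∈ E ∧ e ⊆ X ∪ B} := by
    rintro e (⟨he, hs⟩ | ⟨he, hs⟩) <;>
      exact ⟨he, hs.trans (by simp [Finset.subset_union_left, Finset.subset_union_right])⟩
  have hinter : {e : Finset V | e ∈ E ∧ e ⊆ X} ∩ {e : Finset V | e ∈ E ∧ e ⊆ B}
      = {e : Finset V | e ∈ E ∧ e ⊆ X ∩ B} := by
    ext e
    simp only [Set.mem_inter_iff, Set.mem_setOf_eq, Finset.subset_inter_iff]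
    tauto
  have h1 : ({e : Finset V | e ∈ E ∧ e ⊆ X} ∪ {e : Finset V | e ∈ E ∧ e ⊆ B}).ncard
      + ({e : Finset V | e ∈ E ∧ e ⊆ X ∩ B}).ncard
      = ({e : Finset V | e ∈ E ∧ e ⊆ X}).ncard + ({e : Finset V | e ∈ E ∧ e ⊆ B}).ncard := by
    rw [← hinter]
    exact Set.ncard_union_add_ncard_inter _ _ hfX hfB
  have h2 : ({e : Finset V | e ∈ E ∧ e ⊆ X} ∪ {e : Finset V | e ∈ E ∧ e ⊆ B}).ncard
      ≤ ({e : Finset V | e ∈ E ∧ e ⊆ X ∪ B}).ncard :=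
    Set.ncard_le_ncard hsub (edges_finite E (X ∪ B))
  have : ({e : Finset V | e ∈ E ∧ e ⊆ X}).ncard + ({e : Finset V | e ∈ E ∧ e ⊆ B}).ncard
      ≤ ({e : Finset V | e ∈ E ∧ e ⊆ X ∪ B}).ncard + ({e : Finset V | e ∈ E ∧ e ⊆ X ∩ B}).ncard := by
    omega
  push_cast
  push_cast at hcard
  omega

/-- transitivity of strongness. -/
theorem stmt2 (E : Set (Finset V)) (A B : Finset V) (C : Set V)
    (h1 : Strong E A (↑B : Set V)) (h2 : Strong E B C) :
    Strong E A C := by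
  classical
  obtain ⟨hAB, hA⟩ := h1
  obtain ⟨hBC, hB⟩ := h2
  refine ⟨hAB.trans hBC, ?_⟩
  intro X hAX hXC
  have hsub := hdelta_submodular E X B
  have hXB : hdelta E B ≤ hdelta E (X ∪ B) := by
    apply hB
    · exact Finset.subset_union_right
    · intro x hx
      rcases Finset.mem_union.mp (by exact_mod_cast hx) with h | h
      · exact hXC (by exact_mod_cast h)
      · exact hBC (by exact_mod_cast h)
  have hAXB : hdelta E A ≤ hdelta E (X ∩ B) := by
    apply hA
    · exact Finset.subset_inter hAX (Finset.coe_subset.mp hAB)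
    · intro x hx
      have := Finset.mem_of_mem_inter_right (by exact_mod_cast hx : x ∈ X ∩ B)
      exact_mod_cast this
  linarith
end

section
/- Let V be a vertex set with edge set E and let C ⊆ V be such that δ(A) ≥ 0 for every finite A ⊆ C. Then for every finite A ⊆ C there exists a finite set X with A ⊆ X ⊆ C such that X is strong in C and X ⊆ Y for every finite Y with A ⊆ Y ⊆ C that is strong in C; in particular the smallest strong superset of A in C (the self-sufficient closure of A) exists, is unique, and is finite. -/
variable {V : Type*}

lemma edgeset_finite (E : Set (Finset V)) (A : Finset V) :
    ({e : Finset V | e ∈ E ∧ e ⊆ A}).Finite := by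
  classical
  apply Set.Finite.subset (A.powerset : Finset (Finset V)).finite_toSet
  intro e he
  simp [Finset.mem_powerset, he.2]

lemma hdelta_submod [DecidableEq V] (E : Set (Finset V)) (X Y : Finset V) :
    hdelta E (X ∪ Y) + hdelta E (X ∩ Y) ≤ hdelta E X + hdelta E Y := by
  classical
  set S1 := {e : Finset V | e ∈ E ∧ e ⊆ X} with hS1
  set S2 := {e : Finset V | e ∈ E ∧ e ⊆ Y} with hS2
  set SU := {e : Finset V | e ∈ E ∧ e ⊆ X ∪ Y} with hSU
  set SI := {e : Finset V | e ∈ E ∧ e ⊆ X ∩ Y} with hSI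
  have h1 : S1 ∪ S2 ⊆ SU := by
    rintro e (⟨he, hs⟩ | ⟨he, hs⟩)
    · exact ⟨he, hs.trans Finset.subset_union_left⟩
    · exact ⟨he, hs.trans Finset.subset_union_right⟩
  have h2 : S1 ∩ S2 = SI := by
    ext e
    simp only [Set.mem_inter_iff, Set.mem_setOf_eq, hSI, hS1, hS2, Finset.subset_inter_iff]
    tauto
  have hcount : S1.ncard + S2.ncard ≤ SU.ncard + SI.ncard := by
    have heq := Set.ncard_union_add_ncard_inter S1 S2 (edgeset_finite E X) (edgeset_finite E Y)
    rw [← heq, h2]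
    exact Nat.add_le_add_right (Set.ncard_le_ncard h1 (edgeset_finite E (X ∪ Y))) _
  have hcard : (X ∪ Y).card + (X ∩ Y).card = X.card + Y.card :=
    Finset.card_union_add_card_inter X Y
  unfold hdelta
  have hc1 : ((X ∪ Y).card : ℤ) + (X ∩ Y).card = X.card + Y.card := by exact_mod_cast hcard
  have hc2 : (S1.ncard : ℤ) + S2.ncard ≤ SU.ncard + SI.ncard := by exact_mod_cast hcount
  linarith

/-- existence of the self-sufficient closure. -/
theorem stmt4 (E : Set (Finset V)) (C : Set V)
    (h0 : ∀ A : Finset V, (↑A : Set V) ⊆ C → 0 ≤ hdelta E A)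
    (A : Finset V) (hA : (↑A : Set V) ⊆ C) :
    ∃ X : Finset V, A ⊆ X ∧ Strong E X C ∧
      ∀ Y : Finset V, A ⊆ Y → Strong E Y C → X ⊆ Y := by
  classical
  set T : Set ℕ := {n | ∃ X : Finset V, A ⊆ X ∧ (↑X : Set V) ⊆ C ∧ hdelta E X = n} with hT
  have hTne : T.Nonempty :=
    ⟨(hdelta E A).toNat, A, subset_rfl, hA, (Int.toNat_of_nonneg (h0 A hA)).symm⟩
  set m := sInf T with hm
  have hmin : ∀ Z : Finset V, A ⊆ Z → (↑Z : Set V) ⊆ C → (m : ℤ) ≤ hdelta E Z := by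
    intro Z hAZ hZC
    have h1 : (hdelta E Z).toNat ∈ T := ⟨Z, hAZ, hZC, (Int.toNat_of_nonneg (h0 Z hZC)).symm⟩
    have h2 := Nat.sInf_le h1
    rw [← Int.toNat_of_nonneg (h0 Z hZC)]
    exact_mod_cast h2
  obtain ⟨X0, hAX0, hX0C, hX0m⟩ := Nat.sInf_mem hTne
  -- minimize cardinality among δ-minimizers
  set T2 : Set ℕ := {k | ∃ X : Finset V, A ⊆ X ∧ (↑X : Set V) ⊆ C ∧ hdelta E X = (m : ℤ) ∧
      X.card = k} with hT2
  have hT2ne : T2.Nonempty := ⟨X0.card, X0, hAX0, hX0C, hX0m, rfl⟩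
  obtain ⟨X, hAX, hXC, hXm, hXcard⟩ := Nat.sInf_mem hT2ne
  refine ⟨X, hAX, ⟨hXC, ?_⟩, ?_⟩
  · intro Z hXZ hZC
    rw [hXm]
    exact hmin Z (hAX.trans hXZ) hZC
  · intro Y hAY hY
    obtain ⟨hYC, hYstr⟩ := hY
    have hXYC : (↑(X ∪ Y) : Set V) ⊆ C := by
      rw [Finset.coe_union]
      exact Set.union_subset hXC hYC
    have hYU : hdelta E Y ≤ hdelta E (X ∪ Y) :=
      hYstr (X ∪ Y) Finset.subset_union_right hXYC
    have hsub := hdelta_submod E X Y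
    have hIle : hdelta E (X ∩ Y) ≤ (m : ℤ) := by rw [← hXm]; linarith
    have hAI : A ⊆ X ∩ Y := Finset.subset_inter hAX hAY
    have hIC : (↑(X ∩ Y) : Set V) ⊆ C := (Finset.coe_subset.mpr Finset.inter_subset_left).trans hXC
    have hIeq : hdelta E (X ∩ Y) = (m : ℤ) := le_antisymm hIle (hmin _ hAI hIC)
    have hk : (X ∩ Y).card ∈ T2 := ⟨X ∩ Y, hAI, hIC, hIeq, rfl⟩
    have hle := Nat.sInf_le hk
    rw [← hXcard] at hle
    have : X ∩ Y = X :=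
      Finset.eq_of_subset_of_card_le Finset.inter_subset_left hle
    rw [← this]
    exact Finset.inter_subset_right
end

section
/- Let V be a vertex set with edge set E and let B1, B2 ⊆ V be freely joined over A = B1 ∩ B2. Then for every finite Z ⊆ B1 ∪ B2 one has δ(Z) = δ(Z ∩ B1) + δ(Z ∩ B2) − δ(Z ∩ A). -/
variable {V : Type*}

/-- predimension of a finite subset of a free join decomposes. -/
theorem stmt5 [DecidableEq V] (E : Set (Finset V)) (B1 B2 : Set V)
    [DecidablePred (· ∈ B1)] [DecidablePred (· ∈ B2)]
    (hfree : FreelyJoined E B1 B2) (Z : Finset V) (hZ : (↑Z : Set V) ⊆ B1 ∪ B2) :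
    hdelta E Z =
      hdelta E (Z.filter (· ∈ B1)) + hdelta E (Z.filter (· ∈ B2)) -
        hdelta E (Z.filter (· ∈ B1) ∩ Z.filter (· ∈ B2)) := by
  classical
  set Z1 := Z.filter (· ∈ B1) with hZ1
  set Z2 := Z.filter (· ∈ B2) with hZ2
  have hunion : Z1 ∪ Z2 = Z := by
    ext x
    simp only [hZ1, hZ2, Finset.mem_union, Finset.mem_filter]
    constructor
    · rintro (⟨h, _⟩ | ⟨h, _⟩) <;> exact h
    · intro hx
      rcases hZ hx with h | h
      · exact Or.inl ⟨hx, h⟩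
      · exact Or.inr ⟨hx, h⟩
  -- edge sets
  set S : Set (Finset V) := {e | e ∈ E ∧ e ⊆ Z} with hS
  set S1 : Set (Finset V) := {e | e ∈ E ∧ e ⊆ Z1} with hS1
  set S2 : Set (Finset V) := {e | e ∈ E ∧ e ⊆ Z2} with hS2
  set S12 : Set (Finset V) := {e | e ∈ E ∧ e ⊆ Z1 ∩ Z2} with hS12
  have hSfin : S.Finite := by
    apply Set.Finite.subset (Z.powerset : Finset (Finset V)).finite_toSet
    intro e he
    simp only [Finset.coe_powerset, Set.mem_preimage, Set.mem_powerset_iff]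
    exact Finset.coe_subset.mpr he.2
  have hSu : S = S1 ∪ S2 := by
    ext e
    simp only [hS, hS1, hS2, Set.mem_union, Set.mem_setOf_eq]
    constructor
    · rintro ⟨heE, heZ⟩
      have hcoe : (↑e : Set V) ⊆ B1 ∪ B2 := (Finset.coe_subset.mpr heZ).trans hZ
      rcases hfree e heE hcoe with h | h
      · exact Or.inl ⟨heE, fun x hx => Finset.mem_filter.mpr ⟨heZ hx, h hx⟩⟩
      · exact Or.inr ⟨heE, fun x hx => Finset.mem_filter.mpr ⟨heZ hx, h hx⟩⟩
    · rintro (⟨heE, h⟩ | ⟨heE, h⟩)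
      · exact ⟨heE, h.trans (Finset.filter_subset _ _)⟩
      · exact ⟨heE, h.trans (Finset.filter_subset _ _)⟩
  have hSi : S1 ∩ S2 = S12 := by
    ext e
    simp only [hS1, hS2, hS12, Set.mem_inter_iff, Set.mem_setOf_eq,
      Finset.subset_inter_iff]
    tauto
  have hS1fin : S1.Finite := hSfin.subset (by rw [hSu]; exact Set.subset_union_left)
  have hS2fin : S2.Finite := hSfin.subset (by rw [hSu]; exact Set.subset_union_right)
  have hS12fin : S12.Finite := hS1fin.subset (by rw [← hSi]; exact Set.inter_subset_left)
  have hncard : S.ncard + S12.ncard = S1.ncard + S2.ncard := by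
    rw [hSu, ← hSi]
    exact Set.ncard_union_add_ncard_inter _ _ hS1fin hS2fin
  have hcard : Z.card + (Z1 ∩ Z2).card = Z1.card + Z2.card := by
    rw [← hunion]
    exact Finset.card_union_add_card_inter _ _
  unfold hdelta
  have h1 : ({e : Finset V | e ∈ E ∧ e ⊆ Z} : Set (Finset V)) = S := rfl
  have hc : ((Z.card : ℤ) + ((Z1 ∩ Z2).card : ℤ)) = (Z1.card : ℤ) + (Z2.card : ℤ) := by
    exact_mod_cast hcard
  have hn : ((S.ncard : ℤ) + (S12.ncard : ℤ)) = (S1.ncard : ℤ) + (S2.ncard : ℤ) := by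
    exact_mod_cast hncard
  linarith
end

section
/- In the hypergraph D_t (with t > k ≥ 2): if A_0 ⊆ A and B_0 is a nonempty subset of B with δ(B_0/A_0) ≤ 0, then at least one of the following holds: (1) A∖{h} ⊆ A_0 and B_0 = B; (2) A∖{g} ⊆ A_0 and B_1 ⊆ B_0; (3) A_0 = A and B_2 ⊆ B_0. Moreover, if δ(B_0/A_0) < 0, then A_0 = A and B_0 = B. -/
variable {V : Type*}

/-! The hypergraph `D_t` (for `t > k ≥ 2`), realized concretely on ℕ:
vertices `a_i = i` for `1 ≤ i ≤ k`, `g = k+1`, `h = k+2`, `b_i = k+2+i` for `1 ≤ i ≤ 2t`. -/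

/-- `a_l`, with wraparound: for `l > k`, `a_l = a_i` where `1 ≤ i ≤ k`, `i ≡ l (mod k)`. -/
def aD (k l : ℕ) : ℕ := (l - 1) % k + 1

/-- the vertex `b_i`. -/
def bD (k i : ℕ) : ℕ := k + 2 + i

/-- the edge set of `D_t`. -/
def edgesD (k t : ℕ) : Set (Finset ℕ) :=
  {e | (∃ i, 1 ≤ i ∧ i < 2 * t ∧ e = {bD k i, aD k i, bD k (i + 1)}) ∨
       e = {bD k (2 * t), k + 1, bD k 1} ∨ e = {bD k 1, k + 2, bD k (t + 1)}}

/-- `A = {a_1, …, a_k, g, h}`. -/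
def AD (k : ℕ) : Finset ℕ := Finset.Icc 1 (k + 2)

/-- `B = {b_1, …, b_{2t}}`. -/
def BD (k t : ℕ) : Finset ℕ := Finset.Icc (k + 3) (k + 2 + 2 * t)

/-- `B_1 = {b_1, …, b_{t+1}}`. -/
def B1D (k t : ℕ) : Finset ℕ := Finset.Icc (k + 3) (k + 3 + t)

/-- `B_2 = {b_{t+1}, …, b_{2t}} ∪ {b_1}`. -/
def B2D (k t : ℕ) : Finset ℕ := insert (k + 3) (Finset.Icc (k + 3 + t) (k + 2 + 2 * t))

namespace Stmt7Aux

def edgeOf (k t i : ℕ) : Finset ℕ :=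
  if i = 0 then {bD k 1, k + 2, bD k (t + 1)}
  else if i = 2 * t then {bD k (2 * t), k + 1, bD k 1}
  else {bD k i, aD k i, bD k (i + 1)}

lemma aD_le {k : ℕ} (hk : 1 ≤ k) (i : ℕ) : 1 ≤ aD k i ∧ aD k i ≤ k := by
  unfold aD
  have := Nat.mod_lt (i - 1) (show 0 < k by omega)
  omega

lemma edgesD_iff {k t : ℕ} (ht : 1 ≤ t) (e : Finset ℕ) :
    e ∈ edgesD k t ↔ ∃ i ∈ Finset.Icc 0 (2 * t), e = edgeOf k t i := by
  constructor
  · rintro (⟨i, h1, h2, rfl⟩ | rfl | rfl)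
    · exact ⟨i, by simp [Finset.mem_Icc]; omega,
        by rw [edgeOf, if_neg (by omega), if_neg (by omega)]⟩
    · exact ⟨2 * t, by simp [Finset.mem_Icc], by rw [edgeOf, if_neg (by omega), if_pos rfl]⟩
    · exact ⟨0, by simp, by rw [edgeOf, if_pos rfl]⟩
  · rintro ⟨i, hi, rfl⟩
    simp only [Finset.mem_Icc] at hi
    unfold edgeOf
    by_cases h0 : i = 0
    · subst h0; simp [edgesD]
    · by_cases h2t : i = 2 * t
      · subst h2t; simp [h0, edgesD]
      · rw [if_neg h0, if_neg h2t]
        exact Or.inl ⟨i, by omega, by omega, rfl⟩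

lemma edgeOf_injOn {k t : ℕ} (hk : 2 ≤ k) (ht : k < t) :
    Set.InjOn (edgeOf k t) (Finset.Icc 0 (2 * t)) := by
  intro i hi j hj h
  simp only [Finset.coe_Icc, Set.mem_Icc] at hi hj
  by_contra hne
  have h1 := aD_le (show 1 ≤ k by omega) i
  have h2 := aD_le (show 1 ≤ k by omega) j
  unfold edgeOf at h
  by_cases hi0 : i = 0 <;> by_cases hj0 : j = 0 <;>
    by_cases hit : i = 2 * t <;> by_cases hjt : j = 2 * t
  all_goals try omega
  · -- i = 0, j = 2t
    rw [if_pos hi0, if_neg hj0, if_pos hjt] at h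
    have hx := Finset.ext_iff.mp h (k + 2)
    simp [bD] at hx
    omega
  · -- i = 0, j mid
    rw [if_pos hi0, if_neg hj0, if_neg hjt] at h
    have hx := Finset.ext_iff.mp h (k + 2)
    simp [bD] at hx
    omega
  · -- i = 2t, j = 0
    rw [if_neg hi0, if_pos hit, if_pos hj0] at h
    have hx := Finset.ext_iff.mp h (k + 1)
    simp [bD] at hx
    omega
  · -- i mid, j = 0
    rw [if_neg hi0, if_neg hit, if_pos hj0] at h
    have hx := Finset.ext_iff.mp h (aD k i)
    simp [bD] at hx
    omega
  · -- i = 2t, j mid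
    rw [if_neg hi0, if_pos hit, if_neg hj0, if_neg hjt] at h
    have hx := Finset.ext_iff.mp h (k + 1)
    simp [bD] at hx
    omega
  · -- i mid, j = 2t
    rw [if_neg hi0, if_neg hit, if_neg hj0, if_pos hjt] at h
    have hx := Finset.ext_iff.mp h (aD k i)
    simp [bD] at hx
    omega
  · -- mid mid
    rw [if_neg hi0, if_neg hit, if_neg hj0, if_neg hjt] at h
    have hx := Finset.ext_iff.mp h (bD k i)
    have hy := Finset.ext_iff.mp h (bD k (i + 1))
    simp [bD] at hx hy
    omega

lemma ncard_edges {k t : ℕ} (hk : 2 ≤ k) (ht : k < t) (X : Finset ℕ) :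
    {e : Finset ℕ | e ∈ edgesD k t ∧ e ⊆ X}.ncard
      = ((Finset.Icc 0 (2 * t)).filter (fun i => edgeOf k t i ⊆ X)).card := by
  classical
  have hset : {e : Finset ℕ | e ∈ edgesD k t ∧ e ⊆ X}
      = ↑(((Finset.Icc 0 (2 * t)).filter (fun i => edgeOf k t i ⊆ X)).image (edgeOf k t)) := by
    ext e
    simp only [Set.mem_setOf_eq, Finset.coe_image, Set.mem_image, Finset.mem_coe,
      Finset.mem_filter, edgesD_iff (show 1 ≤ t by omega)]
    constructor
    · rintro ⟨⟨i, hi, rfl⟩, hsub⟩; exact ⟨i, ⟨hi, hsub⟩, rfl⟩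
    · rintro ⟨i, ⟨hi, hsub⟩, rfl⟩; exact ⟨⟨i, hi, rfl⟩, hsub⟩
  rw [hset, Set.ncard_coe_finset]
  exact Finset.card_image_of_injOn ((edgeOf_injOn hk ht).mono
    (Finset.coe_subset.mpr (Finset.filter_subset _ _)))

lemma ncard_edges_sub_A {k t : ℕ} (A0 : Finset ℕ) (hA0 : A0 ⊆ AD k) :
    {e : Finset ℕ | e ∈ edgesD k t ∧ e ⊆ A0} = ∅ := by
  ext e
  simp only [Set.mem_setOf_eq, Set.mem_empty_iff_false, iff_false, not_and]
  intro he hsub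
  have hb : ∃ i, 1 ≤ i ∧ bD k i ∈ e := by
    rcases he with ⟨i, h1, h2, rfl⟩ | rfl | rfl
    · exact ⟨i, h1, by simp⟩
    · exact ⟨1, le_refl 1, by simp⟩
    · exact ⟨1, le_refl 1, by simp⟩
  obtain ⟨i, hi1, hi2⟩ := hb
  have := hA0 (hsub hi2)
  simp only [AD, Finset.mem_Icc, bD] at this
  omega

lemma delta_eq {k t : ℕ} (hk : 2 ≤ k) (ht : k < t) (A0 B0 : Finset ℕ)
    (hA0 : A0 ⊆ AD k) (hB0 : B0 ⊆ BD k t) :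
    hdelta (edgesD k t) (A0 ∪ B0) - hdelta (edgesD k t) A0
      = (B0.card : ℤ)
        - ((Finset.Icc 0 (2 * t)).filter (fun i => edgeOf k t i ⊆ A0 ∪ B0)).card := by
  have hdisj : Disjoint A0 B0 := by
    rw [Finset.disjoint_left]
    intro x hx1 hx2
    have h1 := hA0 hx1
    have h2 := hB0 hx2
    simp only [AD, BD, Finset.mem_Icc] at h1 h2
    omega
  unfold hdelta
  rw [ncard_edges hk ht, ncard_edges_sub_A A0 hA0, Finset.card_union_of_disjoint hdisj]
  simp
  push_cast
  ring

lemma mem_union_low {k t : ℕ} {A0 B0 : Finset ℕ} (_hA0 : A0 ⊆ AD k) (hB0 : B0 ⊆ BD k t)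
    {x : ℕ} (hx : x ≤ k + 2) : x ∈ A0 ∪ B0 ↔ x ∈ A0 := by
  simp only [Finset.mem_union]
  constructor
  · rintro (h | h)
    · exact h
    · have := hB0 h; simp only [BD, Finset.mem_Icc] at this; omega
  · exact Or.inl

lemma mem_union_high {k t : ℕ} {A0 B0 : Finset ℕ} (hA0 : A0 ⊆ AD k) (_hB0 : B0 ⊆ BD k t)
    {x : ℕ} (hx : k + 3 ≤ x) : x ∈ A0 ∪ B0 ↔ x ∈ B0 := by
  simp only [Finset.mem_union]
  constructor
  · rintro (h | h)
    · have := hA0 h; simp only [AD, Finset.mem_Icc] at this; omega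
    · exact h
  · exact Or.inr

lemma edge_sub_mid {k t : ℕ} (hk : 2 ≤ k) {A0 B0 : Finset ℕ} (hA0 : A0 ⊆ AD k)
    (hB0 : B0 ⊆ BD k t) {i : ℕ} (h1 : 1 ≤ i) (h2 : i < 2 * t) :
    edgeOf k t i ⊆ A0 ∪ B0 ↔ (bD k i ∈ B0 ∧ aD k i ∈ A0 ∧ bD k (i + 1) ∈ B0) := by
  have ha := aD_le (show 1 ≤ k by omega) i
  rw [edgeOf, if_neg (by omega), if_neg (by omega)]
  simp only [Finset.insert_subset_iff, Finset.singleton_subset_iff]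
  rw [mem_union_high hA0 hB0 (by simp [bD]; omega),
      mem_union_low hA0 hB0 (by omega),
      mem_union_high hA0 hB0 (by simp [bD]; omega)]

lemma edge_sub_zero {k t : ℕ} {A0 B0 : Finset ℕ} (hA0 : A0 ⊆ AD k)
    (hB0 : B0 ⊆ BD k t) :
    edgeOf k t 0 ⊆ A0 ∪ B0 ↔ (bD k 1 ∈ B0 ∧ k + 2 ∈ A0 ∧ bD k (t + 1) ∈ B0) := by
  rw [edgeOf, if_pos rfl]
  simp only [Finset.insert_subset_iff, Finset.singleton_subset_iff]
  rw [mem_union_high hA0 hB0 (by simp [bD]),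
      mem_union_low hA0 hB0 (by omega),
      mem_union_high hA0 hB0 (by simp [bD]; omega)]

lemma edge_sub_top {k t : ℕ} (ht : 1 ≤ t) {A0 B0 : Finset ℕ} (hA0 : A0 ⊆ AD k)
    (hB0 : B0 ⊆ BD k t) :
    edgeOf k t (2 * t) ⊆ A0 ∪ B0 ↔ (bD k (2 * t) ∈ B0 ∧ k + 1 ∈ A0 ∧ bD k 1 ∈ B0) := by
  rw [edgeOf, if_neg (by omega), if_pos rfl]
  simp only [Finset.insert_subset_iff, Finset.singleton_subset_iff]
  rw [mem_union_high hA0 hB0 (by simp [bD]; omega),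
      mem_union_low hA0 hB0 (by omega),
      mem_union_high hA0 hB0 (by simp [bD])]

lemma bD_inj {k : ℕ} : Function.Injective (bD k) := by
  intro i j h; simp only [bD] at h; omega

lemma B0_eq_image {k t : ℕ} {B0 : Finset ℕ} (hB0 : B0 ⊆ BD k t) :
    B0 = ((Finset.Icc 1 (2 * t)).filter (fun i => bD k i ∈ B0)).image (bD k) := by
  ext b
  simp only [Finset.mem_image, Finset.mem_filter, Finset.mem_Icc]
  constructor
  · intro hb
    have := hB0 hb
    simp only [BD, Finset.mem_Icc] at this
    have hbe : bD k (b - (k + 2)) = b := by simp only [bD]; omega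
    exact ⟨b - (k + 2), ⟨⟨by omega, by omega⟩, by rw [hbe]; exact hb⟩, hbe⟩
  · rintro ⟨i, ⟨_, hb⟩, rfl⟩; exact hb

lemma BD_eq_image {k t : ℕ} : BD k t = (Finset.Icc 1 (2 * t)).image (bD k) := by
  ext b
  simp only [BD, Finset.mem_image, Finset.mem_Icc, bD]
  constructor
  · intro hb; exact ⟨b - (k + 2), ⟨by omega, by omega⟩, by omega⟩
  · rintro ⟨i, hi, rfl⟩; omega

lemma closure {t : ℕ} (ht : 1 ≤ t) (S : Finset ℕ) (hsub : S ⊆ Finset.Icc 1 (2 * t))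
    (hne : S.Nonempty)
    (hcl : ∀ i ∈ S, (if i = 2 * t then 1 else i + 1) ∈ S) :
    S = Finset.Icc 1 (2 * t) := by
  obtain ⟨s, hs⟩ := hne
  have hsb : 1 ≤ s ∧ s ≤ 2 * t := by
    have := hsub hs; simpa [Finset.mem_Icc] using this
  have hstep : ∀ i, i ∈ S → i < 2 * t → i + 1 ∈ S := by
    intro i h3 h2
    have := hcl i h3
    rwa [if_neg (by omega)] at this
  have hup : ∀ d i, i ∈ S → i + d ≤ 2 * t → i + d ∈ S := by
    intro d
    induction d with
    | zero => intro i h _; simpa using h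
    | succ n ih =>
        intro i h hle
        have h1 : i + n ∈ S := ih i h (by omega)
        have := hstep (i + n) h1 (by omega)
        rwa [show i + n + 1 = i + (n + 1) by omega] at this
  have h2t : 2 * t ∈ S := by
    have := hup (2 * t - s) s hs (by omega)
    rwa [show s + (2 * t - s) = 2 * t by omega] at this
  have h1' : 1 ∈ S := by
    have := hcl (2 * t) h2t
    rwa [if_pos rfl] at this
  apply Finset.Subset.antisymm hsub
  intro j hj
  simp only [Finset.mem_Icc] at hj
  have := hup (j - 1) 1 h1' (by omega)
  rwa [show 1 + (j - 1) = j by omega] at this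

lemma aD_low {k a : ℕ} (h1 : 1 ≤ a) (h2 : a ≤ k) : aD k a = a := by
  unfold aD
  rw [Nat.mod_eq_of_lt (by omega)]
  omega

lemma aD_surj (k t : ℕ) (hk : 1 ≤ k) (a : ℕ) (h1 : 1 ≤ a) (h2 : a ≤ k) :
    ∃ i, t + 1 ≤ i ∧ i ≤ t + k ∧ aD k i = a := by
  have hmlt : (a - 1 + k - t % k) % k < k := Nat.mod_lt _ (by omega)
  have htm : t % k < k := Nat.mod_lt _ (by omega)
  refine ⟨t + 1 + ((a - 1 + k - t % k) % k), by omega, by omega, ?_⟩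
  unfold aD
  rw [show t + 1 + ((a - 1 + k - t % k) % k) - 1 = t + (a - 1 + k - t % k) % k by omega]
  rw [Nat.add_mod_mod]
  have hdm := Nat.div_add_mod t k
  rw [show t + (a - 1 + k - t % k) = k * (t / k) + (a - 1 + k) by omega]
  rw [Nat.mul_add_mod, Nat.add_mod_right, Nat.mod_eq_of_lt (by omega)]
  omega

end Stmt7Aux

open Stmt7Aux in
set_option maxHeartbeats 1000000 in
/-- classification of the subextensions of `D_t` with nonpositive
relative predimension. -/
theorem stmt7 (k t : ℕ) (hk : 2 ≤ k) (ht : k < t)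
    (A0 B0 : Finset ℕ) (hA0 : A0 ⊆ AD k) (hB0 : B0 ⊆ BD k t) (hne : B0.Nonempty)
    (hle : hdelta (edgesD k t) (A0 ∪ B0) - hdelta (edgesD k t) A0 ≤ 0) :
    ((AD k \ {k + 2} ⊆ A0 ∧ B0 = BD k t) ∨
     (AD k \ {k + 1} ⊆ A0 ∧ B1D k t ⊆ B0) ∨
     (A0 = AD k ∧ B2D k t ⊆ B0)) ∧
    (hdelta (edgesD k t) (A0 ∪ B0) - hdelta (edgesD k t) A0 < 0 →
      A0 = AD k ∧ B0 = BD k t) := by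
  classical
  have ht1 : 1 ≤ t := by omega
  set P := (Finset.Icc 0 (2 * t)).filter (fun i => edgeOf k t i ⊆ A0 ∪ B0) with hPdef
  set S := (Finset.Icc 1 (2 * t)).filter (fun i => bD k i ∈ B0) with hSdef
  have hdelta_eq := delta_eq hk ht A0 B0 hA0 hB0
  rw [← hPdef] at hdelta_eq
  have hScard : B0.card = S.card := by
    conv_lhs => rw [B0_eq_image hB0, ← hSdef]
    exact Finset.card_image_of_injective _ bD_inj
  have hnum : B0.card ≤ P.card := by
    rw [hdelta_eq] at hle
    omega
  -- membership characterizations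
  have hPmem_mid : ∀ i, 1 ≤ i → i < 2 * t →
      (i ∈ P ↔ (bD k i ∈ B0 ∧ aD k i ∈ A0 ∧ bD k (i + 1) ∈ B0)) := by
    intro i h1 h2
    rw [hPdef, Finset.mem_filter, Finset.mem_Icc,
      edge_sub_mid hk hA0 hB0 h1 h2]
    constructor
    · exact fun h => h.2
    · exact fun h => ⟨⟨by omega, by omega⟩, h⟩
  have hPmem_zero : (0 ∈ P ↔ (bD k 1 ∈ B0 ∧ k + 2 ∈ A0 ∧ bD k (t + 1) ∈ B0)) := by
    rw [hPdef, Finset.mem_filter, Finset.mem_Icc, edge_sub_zero hA0 hB0]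
    constructor
    · exact fun h => h.2
    · exact fun h => ⟨⟨by omega, by omega⟩, h⟩
  have hPmem_top : (2 * t ∈ P ↔ (bD k (2 * t) ∈ B0 ∧ k + 1 ∈ A0 ∧ bD k 1 ∈ B0)) := by
    rw [hPdef, Finset.mem_filter, Finset.mem_Icc, edge_sub_top ht1 hA0 hB0]
    constructor
    · exact fun h => h.2
    · exact fun h => ⟨⟨by omega, by omega⟩, h⟩
  have hSmem : ∀ i, (i ∈ S ↔ (1 ≤ i ∧ i ≤ 2 * t ∧ bD k i ∈ B0)) := by
    intro i
    rw [hSdef, Finset.mem_filter, Finset.mem_Icc]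
    tauto
  have hPrange : ∀ i ∈ P, i ≤ 2 * t := by
    intro i hi
    rw [hPdef, Finset.mem_filter, Finset.mem_Icc] at hi
    omega
  have hPcS : P.erase 0 ⊆ S := by
    intro i hi
    obtain ⟨hi0, hiP⟩ := Finset.mem_erase.mp hi
    have hir := hPrange i hiP
    rw [hSmem]
    by_cases h2t : i = 2 * t
    · subst h2t
      exact ⟨by omega, le_rfl, (hPmem_top.mp hiP).1⟩
    · exact ⟨by omega, by omega, ((hPmem_mid i (by omega) (by omega)).mp hiP).1⟩
  have hPcnext : ∀ i ∈ P.erase 0, (if i = 2 * t then 1 else i + 1) ∈ S := by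
    intro i hi
    obtain ⟨hi0, hiP⟩ := Finset.mem_erase.mp hi
    have hir := hPrange i hiP
    by_cases h2t : i = 2 * t
    · rw [if_pos h2t]
      subst h2t
      exact (hSmem 1).mpr ⟨le_rfl, by omega, (hPmem_top.mp hiP).2.2⟩
    · rw [if_neg h2t]
      exact (hSmem (i + 1)).mpr ⟨by omega, by omega,
        ((hPmem_mid i (by omega) (by omega)).mp hiP).2.2⟩
  have hSsub : S ⊆ Finset.Icc 1 (2 * t) := by
    rw [hSdef]; exact Finset.filter_subset _ _
  have hIccCard : (Finset.Icc 1 (2 * t)).card = 2 * t := by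
    rw [Nat.card_Icc]; omega
  -- helper for a-label values
  have haDa : ∀ a, 1 ≤ a → a ≤ k → aD k a = a := fun a h1 h2 => aD_low h1 h2
  by_cases hBfull : B0 = BD k t
  · -- B0 = B
    have hSeq : S = Finset.Icc 1 (2 * t) := by
      apply Finset.Subset.antisymm hSsub
      intro i hi
      rw [hSmem]
      simp only [Finset.mem_Icc] at hi
      refine ⟨hi.1, hi.2, ?_⟩
      rw [hBfull]
      simp only [BD, Finset.mem_Icc, bD]
      omega
    have hcardB : B0.card = 2 * t := by rw [hScard, hSeq, hIccCard]
    have hPcsub : P.erase 0 ⊆ Finset.Icc 1 (2 * t) := hPcS.trans (by rw [hSeq])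
    have hPcle : (P.erase 0).card ≤ 2 * t := by
      have := Finset.card_le_card hPcsub
      omega
    by_cases h0 : 0 ∈ P
    · have hPcc : (P.erase 0).card = P.card - 1 := Finset.card_erase_of_mem h0
      have hPpos : 1 ≤ P.card := Finset.card_pos.mpr ⟨0, h0⟩
      have hh : k + 2 ∈ A0 := (hPmem_zero.mp h0).2.1
      have hMcard : (Finset.Icc 1 (2 * t) \ P.erase 0).card ≤ 1 := by
        rw [Finset.card_sdiff_of_subset hPcsub, hIccCard]
        omega
      by_cases h2t : 2 * t ∈ P
      · have hg : k + 1 ∈ A0 := (hPmem_top.mp h2t).2.1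
        have hall : ∀ a, 1 ≤ a → a ≤ k → a ∈ A0 := by
          intro a ha1 ha2
          obtain ⟨i, hi1, hi2, hi3⟩ := aD_surj k t (by omega) a ha1 ha2
          by_cases hw : a ∈ P
          · have := (hPmem_mid a ha1 (by omega)).mp hw
            rw [haDa a ha1 ha2] at this
            exact this.2.1
          · have haM : a ∈ Finset.Icc 1 (2 * t) \ P.erase 0 := by
              rw [Finset.mem_sdiff, Finset.mem_Icc]
              exact ⟨⟨ha1, by omega⟩, fun h => hw (Finset.mem_erase.mp h).2⟩
            have hiPc : i ∈ P := by
              by_contra hiP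
              have hiM : i ∈ Finset.Icc 1 (2 * t) \ P.erase 0 := by
                rw [Finset.mem_sdiff, Finset.mem_Icc]
                exact ⟨⟨by omega, by omega⟩, fun h => hiP (Finset.mem_erase.mp h).2⟩
              have hpair : ({a, i} : Finset ℕ) ⊆ Finset.Icc 1 (2 * t) \ P.erase 0 := by
                intro z hz
                simp only [Finset.mem_insert, Finset.mem_singleton] at hz
                rcases hz with rfl | rfl
                · exact haM
                · exact hiM
              have hpc : ({a, i} : Finset ℕ).card = 2 :=
                Finset.card_pair (by omega)
              have := Finset.card_le_card hpair
              omega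
            have := (hPmem_mid i (by omega) (by omega)).mp hiPc
            rw [hi3] at this
            exact this.2.1
        have hAeq : A0 = AD k := by
          apply Finset.Subset.antisymm hA0
          intro x hx
          simp only [AD, Finset.mem_Icc] at hx
          rcases Nat.lt_or_ge x (k + 1) with h | h
          · exact hall x hx.1 (by omega)
          · rcases Nat.lt_or_ge x (k + 2) with h' | h'
            · have : x = k + 1 := by omega
              rw [this]; exact hg
            · have : x = k + 2 := by omega
              rw [this]; exact hh
        have hB2 : B2D k t ⊆ B0 := by
          rw [hBfull]
          intro b hb
          simp only [B2D, Finset.mem_insert, Finset.mem_Icc] at hb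
          simp only [BD, Finset.mem_Icc]
          omega
        exact ⟨Or.inr (Or.inr ⟨hAeq, hB2⟩), fun _ => ⟨hAeq, hBfull⟩⟩
      · -- 2t ∉ P : only 2t missing
        have h2tM : 2 * t ∈ Finset.Icc 1 (2 * t) \ P.erase 0 := by
          rw [Finset.mem_sdiff, Finset.mem_Icc]
          exact ⟨⟨by omega, le_rfl⟩, fun h => h2t (Finset.mem_erase.mp h).2⟩
        have hlow : ∀ i, 1 ≤ i → i < 2 * t → i ∈ P := by
          intro i h1 h2
          by_contra hiP
          have hiM : i ∈ Finset.Icc 1 (2 * t) \ P.erase 0 := by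
            rw [Finset.mem_sdiff, Finset.mem_Icc]
            exact ⟨⟨h1, by omega⟩, fun h => hiP (Finset.mem_erase.mp h).2⟩
          have hpair : ({i, 2 * t} : Finset ℕ) ⊆ Finset.Icc 1 (2 * t) \ P.erase 0 := by
            intro z hz
            simp only [Finset.mem_insert, Finset.mem_singleton] at hz
            rcases hz with rfl | rfl
            · exact hiM
            · exact h2tM
          have hpc : ({i, 2 * t} : Finset ℕ).card = 2 := Finset.card_pair (by omega)
          have := Finset.card_le_card hpair
          omega
        have hall : ∀ a, 1 ≤ a → a ≤ k → a ∈ A0 := by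
          intro a ha1 ha2
          have := (hPmem_mid a ha1 (by omega)).mp (hlow a ha1 (by omega))
          rw [haDa a ha1 ha2] at this
          exact this.2.1
        have hA2 : AD k \ {k + 1} ⊆ A0 := by
          intro x hx
          simp only [AD, Finset.mem_sdiff, Finset.mem_Icc, Finset.mem_singleton] at hx
          rcases Nat.lt_or_ge x (k + 1) with h | h
          · exact hall x hx.1.1 (by omega)
          · have : x = k + 2 := by omega
            rw [this]; exact hh
        have hB1 : B1D k t ⊆ B0 := by
          rw [hBfull]
          intro b hb
          simp only [B1D, Finset.mem_Icc] at hb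
          simp only [BD, Finset.mem_Icc]
          omega
        refine ⟨Or.inr (Or.inl ⟨hA2, hB1⟩), fun hlt => ?_⟩
        exfalso
        rw [hdelta_eq] at hlt
        -- strict: P.card ≥ 2t+1 so M empty, but 2t ∈ M
        have hMpos : 1 ≤ (Finset.Icc 1 (2 * t) \ P.erase 0).card :=
          Finset.card_pos.mpr ⟨2 * t, h2tM⟩
        have hMc : (Finset.Icc 1 (2 * t) \ P.erase 0).card = 2 * t - (P.erase 0).card := by
          rw [Finset.card_sdiff_of_subset hPcsub, hIccCard]
        omega
    · -- 0 ∉ P : full cycle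
      have hPeq : P.erase 0 = P := Finset.erase_eq_of_notMem h0
      have hPsub : P ⊆ Finset.Icc 1 (2 * t) := by rw [← hPeq]; exact hPcsub
      have hPfull : P = Finset.Icc 1 (2 * t) := by
        apply Finset.eq_of_subset_of_card_le hPsub
        rw [hIccCard]; omega
      have hmemP : ∀ i, 1 ≤ i → i ≤ 2 * t → i ∈ P := by
        intro i h1 h2
        rw [hPfull, Finset.mem_Icc]
        exact ⟨h1, h2⟩
      have hg : k + 1 ∈ A0 := (hPmem_top.mp (hmemP (2 * t) (by omega) le_rfl)).2.1
      have hall : ∀ a, 1 ≤ a → a ≤ k → a ∈ A0 := by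
        intro a ha1 ha2
        have := (hPmem_mid a ha1 (by omega)).mp (hmemP a ha1 (by omega))
        rw [haDa a ha1 ha2] at this
        exact this.2.1
      have hA1 : AD k \ {k + 2} ⊆ A0 := by
        intro x hx
        simp only [AD, Finset.mem_sdiff, Finset.mem_Icc, Finset.mem_singleton] at hx
        rcases Nat.lt_or_ge x (k + 1) with h | h
        · exact hall x hx.1.1 (by omega)
        · have : x = k + 1 := by omega
          rw [this]; exact hg
      refine ⟨Or.inl ⟨hA1, hBfull⟩, fun hlt => ?_⟩
      exfalso
      rw [hdelta_eq] at hlt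
      have : P.card = 2 * t := by rw [hPfull, hIccCard]
      omega
  · -- B0 ≠ B
    have hSne : S.Nonempty := by
      obtain ⟨b, hb⟩ := hne
      have hbr := hB0 hb
      simp only [BD, Finset.mem_Icc] at hbr
      refine ⟨b - (k + 2), (hSmem _).mpr ⟨by omega, by omega, ?_⟩⟩
      rw [show bD k (b - (k + 2)) = b by simp only [bD]; omega]
      exact hb
    have hSnotfull : S ≠ Finset.Icc 1 (2 * t) := by
      intro h
      apply hBfull
      rw [B0_eq_image hB0, ← hSdef, h, ← BD_eq_image]
    have hPclt : (P.erase 0).card < S.card := by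
      rcases Nat.lt_or_ge (P.erase 0).card S.card with h | h
      · exact h
      · exfalso
        have hPceq : P.erase 0 = S := Finset.eq_of_subset_of_card_le hPcS h
        apply hSnotfull
        apply closure ht1 S hSsub hSne
        intro i hi
        exact hPcnext i (by rw [hPceq]; exact hi)
    have h0P : 0 ∈ P := by
      by_contra h0
      have hPeq : P.erase 0 = P := Finset.erase_eq_of_notMem h0
      rw [hPeq] at hPclt
      omega
    have hPcc : (P.erase 0).card = P.card - 1 := Finset.card_erase_of_mem h0P
    have hPpos : 1 ≤ P.card := Finset.card_pos.mpr ⟨0, h0P⟩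
    -- all equalities
    have hPceq : (P.erase 0).card = S.card - 1 := by omega
    have hchord := hPmem_zero.mp h0P
    have h1S : 1 ∈ S := (hSmem 1).mpr ⟨le_rfl, by omega, by
      have := hchord.1; rwa [show bD k 1 = k + 3 by simp [bD]] at this ⊢⟩
    have ht1S : t + 1 ∈ S := (hSmem (t + 1)).mpr ⟨by omega, by omega, hchord.2.2⟩
    have hh : k + 2 ∈ A0 := hchord.2.1
    have hD : (S \ P.erase 0).card = 1 := by
      rw [Finset.card_sdiff_of_subset hPcS]
      have := Finset.card_le_card hPcS
      omega
    obtain ⟨x, hx⟩ := Finset.card_eq_one.mp hD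
    have hxS : x ∈ S := by
      have : x ∈ S \ P.erase 0 := by rw [hx]; exact Finset.mem_singleton_self x
      exact (Finset.mem_sdiff.mp this).1
    have hxb : 1 ≤ x ∧ x ≤ 2 * t := by
      have := (hSmem x).mp hxS
      omega
    have hprop : ∀ i ∈ S, i ≠ x → i ∈ P.erase 0 := by
      intro i hi hix
      by_contra h
      have : i ∈ S \ P.erase 0 := Finset.mem_sdiff.mpr ⟨hi, h⟩
      rw [hx, Finset.mem_singleton] at this
      exact hix this
    have hstep : ∀ i ∈ S, i ≠ x → i < 2 * t → (i + 1 ∈ S ∧ aD k i ∈ A0) := by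
      intro i hi hix hilt
      have hiPc := hprop i hi hix
      have hib : 1 ≤ i := ((hSmem i).mp hi).1
      have hiP := (Finset.mem_erase.mp hiPc).2
      have hm := (hPmem_mid i hib hilt).mp hiP
      exact ⟨(hSmem (i + 1)).mpr ⟨by omega, by omega, hm.2.2⟩, hm.2.1⟩
    have hnostrict : ¬(hdelta (edgesD k t) (A0 ∪ B0) - hdelta (edgesD k t) A0 < 0) := by
      rw [hdelta_eq]
      omega
    by_cases hxt : x ≤ t
    · -- upper arc
      have hup : ∀ d, t + 1 + d ≤ 2 * t → t + 1 + d ∈ S := by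
        intro d
        induction d with
        | zero => intro _; simpa using ht1S
        | succ n ih =>
            intro hle2
            have h1 : t + 1 + n ∈ S := ih (by omega)
            have := (hstep (t + 1 + n) h1 (by omega) (by omega)).1
            rwa [show t + 1 + n + 1 = t + 1 + (n + 1) by omega] at this
      have hSup : ∀ i, t + 1 ≤ i → i ≤ 2 * t → i ∈ S := by
        intro i hi1 hi2
        have := hup (i - (t + 1)) (by omega)
        rwa [show t + 1 + (i - (t + 1)) = i by omega] at this
      have hg : k + 1 ∈ A0 := by
        have h2tS : 2 * t ∈ S := hSup (2 * t) (by omega) le_rfl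
        have h2tPc := hprop (2 * t) h2tS (by omega)
        have h2tP := (Finset.mem_erase.mp h2tPc).2
        exact (hPmem_top.mp h2tP).2.1
      have hlab : ∀ i, t + 1 ≤ i → i < 2 * t → aD k i ∈ A0 := by
        intro i hi1 hi2
        exact (hstep i (hSup i hi1 (by omega)) (by omega) hi2).2
      have hall : ∀ a, 1 ≤ a → a ≤ k → a ∈ A0 := by
        intro a ha1 ha2
        obtain ⟨i, hi1, hi2, hi3⟩ := aD_surj k t (by omega) a ha1 ha2
        have := hlab i hi1 (by omega)
        rwa [hi3] at this
      have hAeq : A0 = AD k := by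
        apply Finset.Subset.antisymm hA0
        intro y hy
        simp only [AD, Finset.mem_Icc] at hy
        rcases Nat.lt_or_ge y (k + 1) with h | h
        · exact hall y hy.1 (by omega)
        · rcases Nat.lt_or_ge y (k + 2) with h' | h'
          · have : y = k + 1 := by omega
            rw [this]; exact hg
          · have : y = k + 2 := by omega
            rw [this]; exact hh
      have hB2 : B2D k t ⊆ B0 := by
        intro b hb
        simp only [B2D, Finset.mem_insert, Finset.mem_Icc] at hb
        rcases hb with rfl | hb
        · have := ((hSmem 1).mp h1S).2.2
          rwa [show bD k 1 = k + 3 by simp [bD]] at this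
        · have hiS := hSup (b - (k + 2)) (by omega) (by omega)
          have := ((hSmem _).mp hiS).2.2
          rwa [show bD k (b - (k + 2)) = b by simp only [bD]; omega] at this
      exact ⟨Or.inr (Or.inr ⟨hAeq, hB2⟩), fun hlt => absurd hlt hnostrict⟩
    · -- lower arc
      have hup : ∀ d, 1 + d ≤ t + 1 → 1 + d ∈ S := by
        intro d
        induction d with
        | zero => intro _; simpa using h1S
        | succ n ih =>
            intro hle2
            have h1 : 1 + n ∈ S := ih (by omega)
            have := (hstep (1 + n) h1 (by omega) (by omega)).1
            rwa [show 1 + n + 1 = 1 + (n + 1) by omega] at this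
      have hSlow : ∀ i, 1 ≤ i → i ≤ t + 1 → i ∈ S := by
        intro i hi1 hi2
        have := hup (i - 1) (by omega)
        rwa [show 1 + (i - 1) = i by omega] at this
      have hlab : ∀ i, 1 ≤ i → i ≤ t → aD k i ∈ A0 := by
        intro i hi1 hi2
        exact (hstep i (hSlow i hi1 (by omega)) (by omega) (by omega)).2
      have hall : ∀ a, 1 ≤ a → a ≤ k → a ∈ A0 := by
        intro a ha1 ha2
        have := hlab a ha1 (by omega)
        rwa [haDa a ha1 ha2] at this
      have hA2 : AD k \ {k + 1} ⊆ A0 := by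
        intro y hy
        simp only [AD, Finset.mem_sdiff, Finset.mem_Icc, Finset.mem_singleton] at hy
        rcases Nat.lt_or_ge y (k + 1) with h | h
        · exact hall y hy.1.1 (by omega)
        · have : y = k + 2 := by omega
          rw [this]; exact hh
      have hB1 : B1D k t ⊆ B0 := by
        intro b hb
        simp only [B1D, Finset.mem_Icc] at hb
        have hiS := hSlow (b - (k + 2)) (by omega) (by omega)
        have := ((hSmem _).mp hiS).2.2
        rwa [show bD k (b - (k + 2)) = b by simp only [bD]; omega] at this
      exact ⟨Or.inr (Or.inl ⟨hA2, hB1⟩), fun hlt => absurd hlt hnostrict⟩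
end

section
/- In the hypergraph D_t (with t > k ≥ 2), every subset X of the vertex set A ∪ B with |X| ≥ 2 satisfies δ(X) ≥ 2. -/
variable {V : Type*}

def cEe (k i : ℕ) : Finset ℕ := {bD k i, aD k i, bD k (i + 1)}
def gEe (k t : ℕ) : Finset ℕ := {bD k (2 * t), k + 1, bD k 1}
def hEe (k t : ℕ) : Finset ℕ := {bD k 1, k + 2, bD k (t + 1)}
def edgeFS (k t : ℕ) : Finset (Finset ℕ) :=
  ((Finset.Ico 1 (2 * t)).image (cEe k)) ∪ {gEe k t, hEe k t}
def fmap (k : ℕ) (e : Finset ℕ) : ℕ :=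
  if k + 2 ∈ e then k + 2 else if k + 1 ∈ e then k + 3 else e.sup id

lemma aD_le (k l : ℕ) (hk : 1 ≤ k) : 1 ≤ aD k l ∧ aD k l ≤ k := by
  unfold aD
  have := Nat.mod_lt (l - 1) (show 0 < k by omega)
  omega

lemma mem_edgeFS (k t : ℕ) (e : Finset ℕ) : e ∈ edgeFS k t ↔
    (∃ i, 1 ≤ i ∧ i < 2 * t ∧ e = cEe k i) ∨ e = gEe k t ∨ e = hEe k t := by
  simp only [edgeFS, Finset.mem_union, Finset.mem_image, Finset.mem_Ico,
    Finset.mem_insert, Finset.mem_singleton]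
  constructor
  · rintro (⟨i, ⟨h1, h2⟩, rfl⟩ | h)
    · exact Or.inl ⟨i, h1, h2, rfl⟩
    · exact Or.inr h
  · rintro (⟨i, h1, h2, rfl⟩ | h)
    · exact Or.inl ⟨i, ⟨h1, h2⟩, rfl⟩
    · exact Or.inr h

lemma fmap_hEe (k t : ℕ) : fmap k (hEe k t) = k + 2 := by
  simp [fmap, hEe]

lemma fmap_gEe (k t : ℕ) (ht : 1 ≤ t) : fmap k (gEe k t) = k + 3 := by
  have h1 : k + 2 ∉ gEe k t := by simp [gEe, bD]; omega
  have h2 : k + 1 ∈ gEe k t := by simp [gEe]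
  simp [fmap, h1, h2, bD]

lemma fmap_cEe (k i : ℕ) (hk : 1 ≤ k) (hi : 1 ≤ i) : fmap k (cEe k i) = k + 3 + i := by
  obtain ⟨ha1, ha2⟩ := aD_le k i hk
  have h1 : k + 2 ∉ cEe k i := by simp [cEe, bD]; omega
  have h2 : k + 1 ∉ cEe k i := by simp [cEe, bD]; omega
  have h3 : (cEe k i).sup id = k + 3 + i := by
    apply le_antisymm
    · apply Finset.sup_le
      intro b hb
      simp [cEe, bD] at hb
      rcases hb with rfl | rfl | rfl <;> simp [id] <;> omega
    · exact Finset.le_sup (f := id) (by simp [cEe, bD]; omega : k + 3 + i ∈ cEe k i)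
  simp [fmap, h1, h2, h3]

lemma fmap_mem (k t : ℕ) (hk : 1 ≤ k) (ht : 1 ≤ t) (e : Finset ℕ) (he : e ∈ edgeFS k t) :
    fmap k e ∈ e := by
  rw [mem_edgeFS] at he
  rcases he with ⟨i, hi1, _, rfl⟩ | rfl | rfl
  · rw [fmap_cEe k i hk hi1]; simp [cEe, bD]; omega
  · rw [fmap_gEe k t ht]; simp [gEe, bD]
  · rw [fmap_hEe]; simp [hEe]

lemma fmap_lb (k t : ℕ) (hk : 1 ≤ k) (ht : 1 ≤ t) (e : Finset ℕ) (he : e ∈ edgeFS k t) :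
    k + 2 ≤ fmap k e := by
  rw [mem_edgeFS] at he
  rcases he with ⟨i, hi1, _, rfl⟩ | rfl | rfl
  · rw [fmap_cEe k i hk hi1]; omega
  · rw [fmap_gEe k t ht]; omega
  · rw [fmap_hEe]

lemma fmap_injOn (k t : ℕ) (hk : 1 ≤ k) (ht : 1 ≤ t) :
    Set.InjOn (fmap k) (edgeFS k t) := by
  intro e1 h1 e2 h2 hf
  rw [Finset.mem_coe, mem_edgeFS] at h1 h2
  rcases h1 with ⟨i, hi1, hi2, rfl⟩ | rfl | rfl <;>
    rcases h2 with ⟨j, hj1, hj2, rfl⟩ | rfl | rfl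
  · rw [fmap_cEe k i hk hi1, fmap_cEe k j hk hj1] at hf
    have : i = j := by omega
    rw [this]
  · rw [fmap_cEe k i hk hi1, fmap_gEe k t ht] at hf; omega
  · rw [fmap_cEe k i hk hi1, fmap_hEe] at hf; omega
  · rw [fmap_gEe k t ht, fmap_cEe k j hk hj1] at hf; omega
  · rfl
  · rw [fmap_gEe k t ht, fmap_hEe] at hf; omega
  · rw [fmap_hEe, fmap_cEe k j hk hj1] at hf; omega
  · rw [fmap_hEe, fmap_gEe k t ht] at hf; omega
  · rfl

lemma cycpred (n : ℕ) (P : ℕ → Prop) (hn : 1 ≤ n)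
    (hex : ∃ i, 1 ≤ i ∧ i ≤ n ∧ P i)
    (hnall : ¬ ∀ i, 1 ≤ i → i ≤ n → P i) :
    ∃ i, 1 ≤ i ∧ i ≤ n ∧ P i ∧ ¬ P (if i = 1 then n else i - 1) := by
  by_contra hcon
  push_neg at hcon
  have h : ∀ i, 1 ≤ i → i ≤ n → P i → P (if i = 1 then n else i - 1) := by
    intro i h1 h2 hp
    exact hcon i h1 h2 hp
  have down : ∀ i, i ≤ n → 1 ≤ i → P i → P 1 := by
    intro i
    induction i with
    | zero => omega
    | succ m ih =>
      intro hle h1 hp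
      by_cases hm : m = 0
      · subst hm; exact hp
      · have := h (m + 1) h1 hle hp
        rw [if_neg (by omega)] at this
        simp only [Nat.add_sub_cancel] at this
        exact ih (by omega) (by omega) this
  obtain ⟨i0, hi1, hi2, hp0⟩ := hex
  have p1 : P 1 := down i0 hi2 hi1 hp0
  have pn : P n := by
    have := h 1 le_rfl hn p1
    rwa [if_pos rfl] at this
  have key : ∀ d, d < n → P (n - d) := by
    intro d
    induction d with
    | zero => intro _; simpa using pn
    | succ m ih =>
      intro hd
      have pm := ih (by omega)
      have := h (n - m) (by omega) (by omega) pm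
      rw [if_neg (by omega)] at this
      have heq : n - m - 1 = n - (m + 1) := by omega
      rwa [heq] at this
  apply hnall
  intro j hj1 hj2
  have := key (n - j) (by omega)
  have hnj : n - (n - j) = j := by omega
  rwa [hnj] at this

def CCe (k t i : ℕ) : Finset ℕ := if i = 2 * t then gEe k t else cEe k i

/-- every subset of `D_t` with at least two elements has predimension at least 2. -/
theorem stmt8 (k t : ℕ) (hk : 2 ≤ k) (ht : k < t)
    (X : Finset ℕ) (hX : X ⊆ AD k ∪ BD k t) (hcard : 2 ≤ X.card) :
    2 ≤ hdelta (edgesD k t) X := by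
  classical
  have ht1 : 1 ≤ t := by omega
  have hk1 : 1 ≤ k := by omega
  set F := (edgeFS k t).filter (fun e => e ⊆ X) with hFdef
  have hsub : F ⊆ edgeFS k t := Finset.filter_subset _ _
  have hmemF : ∀ e, e ∈ F ↔ e ∈ edgeFS k t ∧ e ⊆ X := by
    intro e; simp [hFdef]
  have hsetX : {e : Finset ℕ | e ∈ edgesD k t ∧ e ⊆ X} = ↑F := by
    ext e
    simp only [Set.mem_setOf_eq, Finset.mem_coe, hmemF, mem_edgeFS]
    constructor
    · rintro ⟨he, hx⟩
      exact ⟨by simpa [edgesD, cEe, gEe, hEe] using he, hx⟩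
    · rintro ⟨he, hx⟩
      exact ⟨by simpa [edgesD, cEe, gEe, hEe] using he, hx⟩
  have hncard : ({e : Finset ℕ | e ∈ edgesD k t ∧ e ⊆ X}).ncard = F.card := by
    rw [hsetX, Set.ncard_coe_finset]
  unfold hdelta
  rw [hncard]
  suffices h : F.card + 2 ≤ X.card by omega
  suffices hxy : ∃ x ∈ X, ∃ y ∈ X, x ≠ y ∧ ∀ e ∈ F, fmap k e ≠ x ∧ fmap k e ≠ y by
    obtain ⟨x, hx, y, hy, hxyne, hfe⟩ := hxy
    have hcard2 : F.card ≤ ((X.erase x).erase y).card := by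
      apply Finset.card_le_card_of_injOn (fmap k)
      · intro e he
        have heE := hsub he
        have heX : e ⊆ X := ((hmemF e).mp he).2
        have hmem : fmap k e ∈ e := fmap_mem k t hk1 ht1 e heE
        exact Finset.mem_erase.mpr ⟨(hfe e he).2, Finset.mem_erase.mpr ⟨(hfe e he).1, heX hmem⟩⟩
      · exact (fmap_injOn k t hk1 ht1).mono (Finset.coe_subset.mpr hsub)
    have hyex : y ∈ X.erase x := Finset.mem_erase.mpr ⟨Ne.symm hxyne, hy⟩
    rw [Finset.card_erase_of_mem hyex, Finset.card_erase_of_mem hx] at hcard2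
    omega
  by_cases hall : ∀ i, 1 ≤ i → i ≤ 2 * t → CCe k t i ⊆ X
  · refine ⟨1, ?_, k + 1, ?_, by omega, ?_⟩
    · apply hall 1 (by omega) (by omega)
      have ha1 : aD k 1 = 1 := by simp [aD]
      simp [CCe, show (1:ℕ) ≠ 2 * t by omega, cEe, ha1]
    · apply hall (2 * t) (by omega) le_rfl
      simp [CCe, gEe]
    · intro e he
      have hlb := fmap_lb k t hk1 ht1 e (hsub he)
      omega
  by_cases hsome : ∃ i, 1 ≤ i ∧ i ≤ 2 * t ∧ CCe k t i ⊆ X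
  · obtain ⟨i, hi1, hi2, hPi, hPn⟩ := cycpred (2 * t) (fun i => CCe k t i ⊆ X) (by omega) hsome hall
    refine ⟨k + 2 + i, ?_, if i = 2 * t then k + 1 else aD k i, ?_, ?_, ?_⟩
    · apply hPi
      by_cases hi : i = 2 * t
      · simp [CCe, hi, gEe, bD]
      · simp [CCe, hi, cEe, bD]
    · by_cases hi : i = 2 * t
      · rw [if_pos hi]; apply hPi; simp [CCe, hi, gEe]
      · rw [if_neg hi]; apply hPi; simp [CCe, hi, cEe]
    · have := (aD_le k i hk1).2
      split_ifs <;> omega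
    · intro e he
      have heE := hsub he
      have heX : e ⊆ X := ((hmemF e).mp he).2
      constructor
      · rw [mem_edgeFS] at heE
        rcases heE with ⟨j, hj1, hj2, rfl⟩ | rfl | rfl
        · rw [fmap_cEe k j hk1 hj1]
          intro hcontra
          apply hPn
          rw [if_neg (by omega : ¬ i = 1)]
          have hij : i - 1 = j := by omega
          rw [hij]
          simpa [CCe, show j ≠ 2 * t by omega] using heX
        · rw [fmap_gEe k t ht1]
          intro hcontra
          apply hPn
          rw [if_pos (by omega : i = 1)]
          simpa [CCe] using heX
        · rw [fmap_hEe]; omega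
      · have hlb := fmap_lb k t hk1 ht1 e (hsub he)
        have := (aD_le k i hk1).2
        split_ifs <;> omega
  · push_neg at hsome
    have hnotc : ∀ e ∈ F, e = hEe k t := by
      intro e he
      have heE := hsub he
      have heX : e ⊆ X := ((hmemF e).mp he).2
      rw [mem_edgeFS] at heE
      rcases heE with ⟨j, hj1, hj2, rfl⟩ | rfl | rfl
      · exact absurd (by simpa [CCe, show j ≠ 2 * t by omega] using heX) (hsome j hj1 (by omega))
      · exact absurd (by simpa [CCe] using heX) (hsome (2 * t) (by omega) le_rfl)
      · rfl
    by_cases hh : hEe k t ⊆ X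
    · refine ⟨k + 3, hh (by simp [hEe, bD]), k + 3 + t, hh ?_, by omega, ?_⟩
      · simp [hEe, bD]; omega
      · intro e he
        rw [hnotc e he, fmap_hEe]
        omega
    · have hFe : F = ∅ := by
        rw [Finset.eq_empty_iff_forall_notMem]
        intro e he
        exact hh (by rw [← hnotc e he]; exact ((hmemF e).mp he).2)
      obtain ⟨a, ha, b, hb, hab⟩ := Finset.one_lt_card.mp hcard
      exact ⟨a, ha, b, hb, hab, by simp [hFe]⟩
end

section
/- Let N be a hypergraph whose vertex set is M ∪ (A ∪ B), where M ∩ (A ∪ B) = A, the edges of N contained in A ∪ B are exactly the edges of D_t, and M and A ∪ B are freely joined over A (every edge of N is contained in M or in A ∪ B). Then for every finite F ⊆ M and every finite Z with F ⊆ Z ⊆ M ∪ (A ∪ B), if δ(Z/F) < 0 then either δ((Z ∩ M)/F) < 0 or |Z ∩ B| ≥ t. -/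
variable {V : Type*}

/-! ### Auxiliary definitions and lemmas for `stmt9` -/

/-- the `i`-th cycle edge of `D_t`, for `1 ≤ i ≤ 2t` (the `2t`-th one is the `g`-edge). -/
def edD (k t i : ℕ) : Finset ℕ :=
  if i = 2 * t then {bD k (2 * t), k + 1, bD k 1} else {bD k i, aD k i, bD k (i + 1)}

/-- cyclic successor on `{1, …, 2t}`. -/
def nxtD (t i : ℕ) : ℕ := if i = 2 * t then 1 else i + 1

/-- the chord edge `{b_1, h, b_{t+1}}`. -/
def chordE (k t : ℕ) : Finset ℕ := {bD k 1, k + 2, bD k (t + 1)}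

lemma bD_mem_edD (k t i : ℕ) : bD k i ∈ edD k t i := by
  unfold edD; split
  · next h => subst h; simp
  · simp

lemma bD_nxt_mem_edD (k t i : ℕ) : bD k (nxtD t i) ∈ edD k t i := by
  unfold edD nxtD; split <;> simp

lemma mem_edgesD_iff (k t : ℕ) (ht : 1 ≤ t) (e : Finset ℕ) :
    e ∈ edgesD k t ↔ (∃ i, 1 ≤ i ∧ i ≤ 2 * t ∧ e = edD k t i) ∨ e = chordE k t := by
  simp only [edgesD, Set.mem_setOf_eq, chordE, edD]
  constructor
  · rintro (⟨i, h1, h2, rfl⟩ | rfl | rfl)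
    · exact Or.inl ⟨i, h1, by omega, by rw [if_neg (by omega)]⟩
    · exact Or.inl ⟨2 * t, by omega, le_refl _, by rw [if_pos rfl]⟩
    · exact Or.inr rfl
  · rintro (⟨i, h1, h2, rfl⟩ | rfl)
    · by_cases h : i = 2 * t
      · subst h; rw [if_pos rfl]; exact Or.inr (Or.inl rfl)
      · rw [if_neg h]; exact Or.inl ⟨i, h1, by omega, rfl⟩
    · exact Or.inr (Or.inr rfl)

lemma bD_mem_BD {k t j : ℕ} (h1 : 1 ≤ j) (h2 : j ≤ 2 * t) : bD k j ∈ BD k t := by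
  simp only [bD, BD, Finset.mem_Icc]; omega

lemma aD_mem_AD {k : ℕ} (hk : 1 ≤ k) (i : ℕ) : aD k i ∈ AD k := by
  have := Nat.mod_lt (i - 1) (show 0 < k by omega)
  simp only [aD, AD, Finset.mem_Icc]; omega

lemma edD_subset_AB {k t i : ℕ} (hk : 1 ≤ k) (h1 : 1 ≤ i) (h2 : i ≤ 2 * t) :
    edD k t i ⊆ AD k ∪ BD k t := by
  unfold edD; split <;>
    simp only [Finset.insert_subset_iff, Finset.singleton_subset_iff, Finset.mem_union]
  · refine ⟨Or.inr (bD_mem_BD (by omega) le_rfl), Or.inl ?_, Or.inr (bD_mem_BD le_rfl (by omega))⟩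
    simp only [AD, Finset.mem_Icc]; omega
  · next h =>
    exact ⟨Or.inr (bD_mem_BD h1 h2), Or.inl (aD_mem_AD hk i),
      Or.inr (bD_mem_BD (by omega) (by omega))⟩

lemma chordE_subset_AB {k t : ℕ} (ht : 1 ≤ t) : chordE k t ⊆ AD k ∪ BD k t := by
  unfold chordE
  simp only [Finset.insert_subset_iff, Finset.singleton_subset_iff, Finset.mem_union]
  refine ⟨Or.inr (bD_mem_BD le_rfl (by omega)), Or.inl ?_,
    Or.inr (bD_mem_BD (by omega) (by omega))⟩
  simp only [AD, Finset.mem_Icc]; omega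

lemma edgesD_subset_AB {k t : ℕ} (hk : 1 ≤ k) (ht : 1 ≤ t) :
    ∀ e ∈ edgesD k t, e ⊆ AD k ∪ BD k t := by
  intro e he
  rcases (mem_edgesD_iff k t ht e).1 he with ⟨i, h1, h2, rfl⟩ | rfl
  · exact edD_subset_AB hk h1 h2
  · exact chordE_subset_AB ht

lemma edgesD_exists_b {k t : ℕ} (ht : 1 ≤ t) :
    ∀ e ∈ edgesD k t, ∃ j, 1 ≤ j ∧ j ≤ 2 * t ∧ bD k j ∈ e := by
  intro e he
  rcases (mem_edgesD_iff k t ht e).1 he with ⟨i, h1, h2, rfl⟩ | rfl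
  · exact ⟨i, h1, h2, bD_mem_edD k t i⟩
  · exact ⟨1, le_rfl, by omega, by simp [chordE]⟩

/-- Key combinatorial bound: if `Z` meets `B` in fewer than `t` points, then the number of
`D_t`-edges contained in `Z` is at most `|Z ∩ B|`. -/
lemma keyBound (k t : ℕ) (hk : 2 ≤ k) (ht : k < t) (Z : Finset ℕ)
    (hs : (Z ∩ BD k t).card < t) :
    ({e : Finset ℕ | e ∈ edgesD k t ∧ e ⊆ Z}).ncard ≤ (Z ∩ BD k t).card := by
  classical
  have ht1 : 1 ≤ t := by omega
  set S := Z ∩ BD k t with hS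
  set TZ := (Finset.Icc 1 (2 * t)).filter (fun i => edD k t i ⊆ Z) with hTZ
  set C : Finset (Finset ℕ) := if chordE k t ⊆ Z then {chordE k t} else ∅ with hC
  have hset : {e : Finset ℕ | e ∈ edgesD k t ∧ e ⊆ Z} = ↑(TZ.image (edD k t) ∪ C) := by
    ext e
    constructor
    · rintro ⟨he, hz⟩
      refine Finset.mem_coe.2 ?_
      rcases (mem_edgesD_iff k t ht1 e).1 he with ⟨i, h1, h2, rfl⟩ | rfl
      · exact Finset.mem_union_left _ (Finset.mem_image.2
          ⟨i, Finset.mem_filter.2 ⟨Finset.mem_Icc.2 ⟨h1, h2⟩, hz⟩, rfl⟩)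
      · refine Finset.mem_union_right _ ?_
        rw [hC, if_pos hz]
        exact Finset.mem_singleton_self _
    · intro h
      rcases Finset.mem_union.1 (Finset.mem_coe.1 h) with him | hc
      · obtain ⟨i, hi, rfl⟩ := Finset.mem_image.1 him
        obtain ⟨hi1, hi2⟩ := Finset.mem_filter.1 hi
        obtain ⟨h1, h2⟩ := Finset.mem_Icc.1 hi1
        exact ⟨(mem_edgesD_iff k t ht1 _).2 (Or.inl ⟨i, h1, h2, rfl⟩), hi2⟩
      · by_cases hch : chordE k t ⊆ Z
        · rw [hC, if_pos hch] at hc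
          rw [Finset.mem_singleton.1 hc]
          exact ⟨(mem_edgesD_iff k t ht1 _).2 (Or.inr rfl), hch⟩
        · rw [hC, if_neg hch] at hc
          exact absurd hc (Finset.notMem_empty _)
  have hmaps : ∀ i ∈ TZ, bD k (nxtD t i) ∈ S := by
    intro i hi
    obtain ⟨hi1, hi2⟩ := Finset.mem_filter.1 hi
    obtain ⟨ha, hb⟩ := Finset.mem_Icc.1 hi1
    refine Finset.mem_inter.2 ⟨hi2 (bD_nxt_mem_edD k t i), ?_⟩
    unfold nxtD; split
    · exact bD_mem_BD le_rfl (by omega)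
    · next h => exact bD_mem_BD (by omega) (by omega)
  have hinj : Set.InjOn (fun i => bD k (nxtD t i)) TZ := by
    intro i hi j hj hij
    obtain ⟨hi1, -⟩ := Finset.mem_filter.1 hi
    obtain ⟨hj1, -⟩ := Finset.mem_filter.1 hj
    obtain ⟨hia, hib⟩ := Finset.mem_Icc.1 hi1
    obtain ⟨hja, hjb⟩ := Finset.mem_Icc.1 hj1
    simp only [bD] at hij
    have : nxtD t i = nxtD t j := by omega
    unfold nxtD at this; split_ifs at this <;> omega
  have hcard : TZ.card ≤ S.card := Finset.card_le_card_of_injOn _ hmaps hinj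
  rw [hset, Set.ncard_coe_finset]
  have hcardC : C.card ≤ 1 := by
    rw [hC]; split <;> simp
  by_cases hch : chordE k t ⊆ Z
  · -- in this case the injection is not surjective, so `TZ.card < S.card`
    have hlt : TZ.card < S.card := by
      by_contra hle
      push_neg at hle
      have hsurj := Finset.surj_on_of_inj_on_of_card_le (s := TZ) (t := S)
        (fun i _ => bD k (nxtD t i)) (fun i hi => hmaps i hi)
        (fun i j hi hj h => hinj hi hj h) hle
      have h1Z : bD k 1 ∈ Z := hch (by simp [chordE])
      have hclose : ∀ m, 1 ≤ m → m ≤ 2 * t → bD k m ∈ Z →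
          bD k (if m = 1 then 2 * t else m - 1) ∈ Z := by
        intro m hm1 hm2 hmZ
        have hmS : bD k m ∈ S := Finset.mem_inter.2 ⟨hmZ, bD_mem_BD hm1 hm2⟩
        obtain ⟨i, hi, heq⟩ := hsurj _ hmS
        obtain ⟨hi1, hi2⟩ := Finset.mem_filter.1 hi
        obtain ⟨hia, hib⟩ := Finset.mem_Icc.1 hi1
        have hnm : nxtD t i = m := by simp only [bD] at heq; omega
        have hieq : (if m = 1 then 2 * t else m - 1) = i := by
          unfold nxtD at hnm; split_ifs at hnm ⊢ <;> omega
        rw [hieq]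
        exact hi2 (bD_mem_edD k t i)
      have hall : ∀ n, n ≤ 2 * t - 1 → bD k (2 * t - n) ∈ Z := by
        intro n
        induction n with
        | zero =>
          intro _
          have := hclose 1 le_rfl (by omega) h1Z
          rw [if_pos rfl] at this
          simpa using this
        | succ n ih =>
          intro hn
          have h' := ih (by omega)
          have := hclose (2 * t - n) (by omega) (by omega) h'
          rw [if_neg (by omega)] at this
          have heq : 2 * t - n - 1 = 2 * t - (n + 1) := by omega
          rwa [heq] at this
      have hSall : ∀ m ∈ Finset.Icc 1 (2 * t), bD k m ∈ S := by
        intro m hm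
        obtain ⟨hm1, hm2⟩ := Finset.mem_Icc.1 hm
        have := hall (2 * t - m) (by omega)
        rw [show 2 * t - (2 * t - m) = m by omega] at this
        exact Finset.mem_inter.2 ⟨this, bD_mem_BD hm1 hm2⟩
      have hbig : (Finset.Icc 1 (2 * t)).card ≤ S.card :=
        Finset.card_le_card_of_injOn (bD k) hSall
          (fun a _ b _ h => by simp only [bD] at h; omega)
      rw [Nat.card_Icc] at hbig
      omega
    calc (TZ.image (edD k t) ∪ C).card ≤ (TZ.image (edD k t)).card + C.card :=
          Finset.card_union_le _ _
      _ ≤ TZ.card + 1 := Nat.add_le_add (Finset.card_image_le) hcardC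
      _ ≤ S.card := by omega
  · have hCe : C = ∅ := by rw [hC, if_neg hch]
    rw [hCe, Finset.union_empty]
    exact le_trans Finset.card_image_le hcard

/-- in a free join of `M` with `D_t` over `A`, a negative relative
predimension over a base inside `M` comes either from inside `M` or uses at
least `t` points of `B`. -/
theorem stmt9 (k t : ℕ) (hk : 2 ≤ k) (ht : k < t)
    (M : Set ℕ) [DecidablePred (· ∈ M)] (EN : Set (Finset ℕ))
    (hMA : M ∩ (↑(AD k ∪ BD k t) : Set ℕ) = (↑(AD k) : Set ℕ))
    (hedges : ∀ e : Finset ℕ, e ⊆ AD k ∪ BD k t → (e ∈ EN ↔ e ∈ edgesD k t))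
    (hfree : ∀ e ∈ EN, (↑e : Set ℕ) ⊆ M ∨ e ⊆ AD k ∪ BD k t)
    (F Z : Finset ℕ) (hF : (↑F : Set ℕ) ⊆ M) (hFZ : F ⊆ Z)
    (hZ : (↑Z : Set ℕ) ⊆ M ∪ (↑(AD k ∪ BD k t) : Set ℕ))
    (hneg : hdelta EN Z - hdelta EN F < 0) :
    hdelta EN (Z.filter (· ∈ M)) - hdelta EN F < 0 ∨ t ≤ (Z ∩ BD k t).card := by
  have hk1 : 1 ≤ k := by omega
  have ht1 : 1 ≤ t := by omega
  set ZM := Z.filter (· ∈ M) with hZMdef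
  -- A ⊆ M, and B ∩ M = ∅
  have hAM : ∀ x ∈ AD k, x ∈ M := by
    intro x hx
    have : x ∈ M ∩ (↑(AD k ∪ BD k t) : Set ℕ) := by
      rw [hMA]; exact Finset.mem_coe.2 hx
    exact this.1
  have hBM : ∀ x ∈ BD k t, x ∉ M := by
    intro x hx hxM
    have hx2 : x ∈ (↑(AD k ∪ BD k t) : Set ℕ) :=
      Finset.mem_coe.2 (Finset.mem_union_right _ hx)
    have hxA : x ∈ (↑(AD k) : Set ℕ) := by rw [← hMA]; exact ⟨hxM, hx2⟩
    simp only [AD, BD, Finset.coe_Icc, Set.mem_Icc, Finset.mem_Icc] at hxA hx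
    omega
  -- cardinality split of Z
  have hZBfilter : Z ∩ BD k t = Z.filter (fun x => ¬ x ∈ M) := by
    ext x
    simp only [Finset.mem_inter, Finset.mem_filter]
    constructor
    · rintro ⟨hxZ, hxB⟩; exact ⟨hxZ, hBM x hxB⟩
    · rintro ⟨hxZ, hnM⟩
      refine ⟨hxZ, ?_⟩
      rcases hZ (Finset.mem_coe.2 hxZ) with h | h
      · exact absurd h hnM
      · rcases Finset.mem_union.1 (Finset.mem_coe.1 h) with ha | hb
        · exact absurd (hAM x ha) hnM
        · exact hb
  have hcards : Z.card = ZM.card + (Z ∩ BD k t).card := by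
    rw [hZBfilter, hZMdef]
    exact (Finset.card_filter_add_card_filter_not (p := (· ∈ M))).symm
  -- edge set partition
  set EZ := {e : Finset ℕ | e ∈ EN ∧ e ⊆ Z} with hEZdef
  set EZM := {e : Finset ℕ | e ∈ EN ∧ e ⊆ ZM} with hEZMdef
  set DZ := {e : Finset ℕ | e ∈ edgesD k t ∧ e ⊆ Z} with hDZdef
  have hDEN : ∀ e ∈ edgesD k t, e ∈ EN := fun e he =>
    (hedges e (edgesD_subset_AB hk1 ht1 e he)).2 he
  have hnotM : ∀ e ∈ edgesD k t, ¬ (↑e : Set ℕ) ⊆ M := by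
    intro e he hsub
    have hsubAB : (↑e : Set ℕ) ⊆ (↑(AD k ∪ BD k t) : Set ℕ) := fun x hx =>
      Finset.mem_coe.2 (edgesD_subset_AB hk1 ht1 e he (Finset.mem_coe.1 hx))
    have hA : (↑e : Set ℕ) ⊆ (↑(AD k) : Set ℕ) := by
      rw [← hMA]; exact Set.subset_inter hsub hsubAB
    obtain ⟨j, hj1, hj2, hjb⟩ := edgesD_exists_b ht1 e he
    have := hA (Finset.mem_coe.2 hjb)
    simp only [AD, Finset.coe_Icc, Set.mem_Icc, bD] at this
    omega
  have hpart : EZ = EZM ∪ DZ := by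
    ext e
    simp only [hEZdef, hEZMdef, hDZdef, Set.mem_setOf_eq, Set.mem_union]
    constructor
    · rintro ⟨heN, heZ⟩
      rcases hfree e heN with hM | hAB
      · exact Or.inl ⟨heN, fun x hx =>
          Finset.mem_filter.2 ⟨heZ hx, hM (Finset.mem_coe.2 hx)⟩⟩
      · exact Or.inr ⟨(hedges e hAB).1 heN, heZ⟩
    · rintro (⟨heN, heZM⟩ | ⟨heD, heZ⟩)
      · exact ⟨heN, heZM.trans (Finset.filter_subset _ _)⟩
      · exact ⟨hDEN e heD, heZ⟩
  have hdisj : Disjoint EZM DZ := by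
    rw [Set.disjoint_left]
    rintro e ⟨heN, heZM⟩ ⟨heD, -⟩
    exact hnotM e heD (fun x hx =>
      (Finset.mem_filter.1 (heZM (Finset.mem_coe.1 hx))).2)
  have hfinM : EZM.Finite :=
    Set.Finite.subset (ZM.powerset).finite_toSet
      (fun e he => Finset.mem_coe.2 (Finset.mem_powerset.2 he.2))
  have hfinD : DZ.Finite :=
    Set.Finite.subset (Z.powerset).finite_toSet
      (fun e he => Finset.mem_coe.2 (Finset.mem_powerset.2 he.2))
  have hEZcard : EZ.ncard = EZM.ncard + DZ.ncard := by
    rw [hpart, Set.ncard_union_eq hdisj hfinM hfinD]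
  by_cases hst : t ≤ (Z ∩ BD k t).card
  · exact Or.inr hst
  · left
    have hkey : DZ.ncard ≤ (Z ∩ BD k t).card :=
      keyBound k t hk ht Z (by omega)
    have e1 : hdelta EN Z = (Z.card : ℤ) - (EZ.ncard : ℤ) := rfl
    have e2 : hdelta EN ZM = (ZM.card : ℤ) - (EZM.ncard : ℤ) := rfl
    have hle : hdelta EN ZM ≤ hdelta EN Z := by
      rw [e1, e2, hEZcard, hcards]
      push_cast
      omega
    omega
end
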